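/- Let X ⊆ ℝⁿ be a nonempty compact convex set, K, m, N positive integers, for each k ∈ [K] let a_k(x) = Â_k x + â_k ∈ ℝ^m and b_k(x) = B̂_kᵀ x + b̂_k ∈ ℝ be affine maps, let ζ¹, …, ζ^N ∈ ℝ^m, θ ≥ 0, and let q ∈ {1, ∞}. Then the function g : X → ℝ defined by g(x) = (1/N) Σ_{i∈[N]} min_{k∈[K]} ( (ζⁱ)ᵀ a_k(x) + b_k(x) − θ ‖a_k(x)‖_q ) is MICP-representable; that is, both X and the epigraph {(x, t) : x ∈ X, g(x) ≤ t} are MICP-representable. -/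

import Mathlib

open scoped ENNReal

/-- A set `S ⊆ E` (think `E = ℝⁿ`) is mixed-integer convex programming representable
(MICP-R) if there exist nonnegative integers `p`, `d` and a closed convex set
`M ⊆ E × ℝᵖ × ℝᵈ` such that `x ∈ S` iff there are `y ∈ ℝᵖ` and `z ∈ ℝᵈ` with all
coordinates of `z` integral and `(x, y, z) ∈ M`. -/
def IsMICPR {E : Type*} [AddCommGroup E] [Module ℝ E] [TopologicalSpace E]
    (S : Set E) : Prop :=
  ∃ (p d : ℕ) (M : Set (E × (Fin p → ℝ) × (Fin d → ℝ))),
    IsClosed M ∧ Convex ℝ M ∧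
      ∀ x : E, x ∈ S ↔ ∃ (y : Fin p → ℝ) (z : Fin d → ℝ),
        (∀ i, ∃ k : ℤ, z i = (k : ℝ)) ∧ (x, y, z) ∈ M

/-- The `ℓ_q` norm of a vector in `ℝ^m`, for `q ∈ [1, ∞]` (`q : ℝ≥0∞`). -/
noncomputable def pnorm (q : ℝ≥0∞) [Fact (1 ≤ q)] {m : ℕ} (v : Fin m → ℝ) : ℝ :=
  ‖(WithLp.equiv q (Fin m → ℝ)).symm v‖

lemma pnorm_one {m : ℕ} [inst : Fact ((1:ℝ≥0∞) ≤ 1)] (v : Fin m → ℝ) :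
    pnorm 1 v = ∑ j, |v j| := by
  rw [pnorm, PiLp.norm_eq_sum (by norm_num)]
  simp [WithLp.equiv_symm_apply, PiLp.toLp_apply, Real.norm_eq_abs]

lemma pnorm_top {m : ℕ} [inst : Fact ((1:ℝ≥0∞) ≤ ⊤)] (v : Fin m → ℝ) :
    pnorm ⊤ v = ⨆ j, |v j| := by
  rw [pnorm, PiLp.norm_eq_ciSup]
  simp [WithLp.equiv_symm_apply, PiLp.toLp_apply, Real.norm_eq_abs]

lemma dual_rep {m : ℕ} (hm : 0 < m) (θ : ℝ) (hθ : 0 ≤ θ) (q : ℝ≥0∞) [Fact (1 ≤ q)]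
    (hq : q = 1 ∨ q = ⊤) :
    ∃ (W : Type) (_ : Fintype W) (_ : Nonempty W) (wv : W → Fin m → ℝ),
      (∀ (v : Fin m → ℝ) (w : W), -(θ * pnorm q v) ≤ ∑ j, wv w j * v j) ∧
      ∀ v : Fin m → ℝ, ∃ w : W, (∑ j, wv w j * v j) = -(θ * pnorm q v) := by
  rcases hq with hq | hq <;> subst hq
  · refine ⟨Fin m → Bool, inferInstance, inferInstance,
      fun s j => -θ * (if s j then 1 else -1), ?_, ?_⟩
    · intro v s
      rw [pnorm_one]
      have h1 : ∀ j : Fin m, -(θ * |v j|) ≤ (-θ * (if s j then (1:ℝ) else -1)) * v j := by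
        intro j
        have h2 : θ * v j ≤ θ * |v j| := mul_le_mul_of_nonneg_left (le_abs_self _) hθ
        have h3 : θ * (-|v j|) ≤ θ * v j := mul_le_mul_of_nonneg_left (neg_abs_le _) hθ
        by_cases hb : s j <;> simp [hb] <;> nlinarith
      calc -(θ * ∑ j, |v j|) = ∑ j, -(θ * |v j|) := by
            simp [Finset.mul_sum]
        _ ≤ _ := Finset.sum_le_sum fun j _ => h1 j
    · intro v
      refine ⟨fun j => decide (0 ≤ v j), ?_⟩
      rw [pnorm_one]
      have h1 : ∀ j : Fin m, (-θ * (if decide (0 ≤ v j) then (1:ℝ) else -1)) * v j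
          = -(θ * |v j|) := by
        intro j
        by_cases hb : 0 ≤ v j
        · rw [abs_of_nonneg hb, if_pos (by simpa using hb)]; ring
        · rw [abs_of_neg (not_le.mp hb), if_neg (by simpa using hb)]; ring
      rw [Finset.sum_congr rfl fun j _ => h1 j]
      simp [Finset.mul_sum]
  · have hne' : Nonempty (Fin m) := ⟨⟨0, hm⟩⟩
    have hsum : ∀ (c : ℝ) (j0 : Fin m) (v : Fin m → ℝ),
        (∑ j, (if j = j0 then c else 0) * v j) = c * v j0 := by
      intro c j0 v
      rw [Finset.sum_congr rfl (fun j _ => by rw [ite_mul, zero_mul])]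
      simp
    refine ⟨Fin m × Bool, inferInstance, inferInstance,
      fun w j => if j = w.1 then -θ * (if w.2 then 1 else -1) else 0, ?_, ?_⟩
    · intro v w
      rw [pnorm_top, hsum]
      have h2 : |v w.1| ≤ ⨆ j, |v j| := le_ciSup (f := fun j => |v j|) (Set.Finite.bddAbove (Set.finite_range _)) w.1
      have h1 : (if w.2 then (1:ℝ) else -1) * v w.1 ≤ |v w.1| := by
        by_cases hb : w.2 <;> simp [hb, le_abs_self, neg_abs_le, neg_le_abs]
      have := mul_le_mul_of_nonneg_left (h1.trans h2) hθ
      nlinarith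
    · intro v
      obtain ⟨j0, hj0⟩ := Finite.exists_max (fun j => |v j|)
      have hsup : (⨆ j, |v j|) = |v j0| :=
        le_antisymm (ciSup_le hj0) (le_ciSup (f := fun j => |v j|) (Set.Finite.bddAbove (Set.finite_range _)) j0)
      refine ⟨(j0, decide (0 ≤ v j0)), ?_⟩
      rw [pnorm_top, hsum, hsup]
      by_cases hb : 0 ≤ v j0
      · rw [abs_of_nonneg hb, if_pos (by simpa using hb)]; ring
      · rw [abs_of_neg (not_le.mp hb), if_neg (by simpa using hb)]; ring

lemma micpr_min_affine {n : ℕ} (X : Set (Fin n → ℝ)) (hne : X.Nonempty)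
    (hcomp : IsCompact X) (hconv : Convex ℝ X)
    (Λ : Type) [Fintype Λ] [Nonempty Λ]
    (ℓ : Λ → (Fin n → ℝ) → ℝ)
    (hcont : ∀ l, Continuous (ℓ l))
    (haff : ∀ l (u v : Fin n → ℝ) (s r : ℝ), s + r = 1 →
      ℓ l (s • u + r • v) = s * ℓ l u + r * ℓ l v) :
    IsMICPR {xt : (Fin n → ℝ) × ℝ | xt.1 ∈ X ∧ ∃ l, ℓ l xt.1 ≤ xt.2} := by
  classical
  -- upper and lower bounds
  have hU : ∀ l : Λ, ∃ Ul : ℝ, ∀ x ∈ X, ℓ l x ≤ Ul := by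
    intro l
    obtain ⟨x0, -, hx0⟩ := hcomp.exists_isMaxOn hne (hcont l).continuousOn
    exact ⟨ℓ l x0, fun x hx => hx0 hx⟩
  have hV : ∀ l : Λ, ∃ Vl : ℝ, ∀ x ∈ X, Vl ≤ ℓ l x := by
    intro l
    obtain ⟨x0, -, hx0⟩ := hcomp.exists_isMinOn hne (hcont l).continuousOn
    exact ⟨ℓ l x0, fun x hx => hx0 hx⟩
  choose U hU using hU
  choose V hV using hV
  have hfne : (Finset.univ : Finset Λ).Nonempty := Finset.univ_nonempty
  set Um : ℝ := Finset.univ.sup' hfne U with hUm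
  set Vm : ℝ := Finset.univ.inf' hfne V with hVm
  set Big : ℝ := Um - Vm with hBig
  have hℓU : ∀ l, ∀ x ∈ X, ℓ l x ≤ Um := fun l x hx =>
    (hU l x hx).trans (Finset.le_sup' U (Finset.mem_univ l))
  have hℓV : ∀ l, ∀ x ∈ X, Vm ≤ ℓ l x := fun l x hx =>
    (Finset.inf'_le V (Finset.mem_univ l)).trans (hV l x hx)
  have hBig0 : 0 ≤ Big := by
    obtain ⟨x0, hx0⟩ := hne
    obtain l0 := Classical.arbitrary Λ
    have := (hℓV l0 x0 hx0).trans (hℓU l0 x0 hx0)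
    simp only [hBig]; linarith
  set d := Fintype.card Λ with hd
  set e : Λ ≃ Fin d := Fintype.equivFin Λ with he
  refine ⟨0, d, {w : ((Fin n → ℝ) × ℝ) × (Fin 0 → ℝ) × (Fin d → ℝ) |
      w.1.1 ∈ X ∧ (∀ j, 0 ≤ w.2.2 j) ∧ (∑ j, w.2.2 j) = 1 ∧
      ∀ l, ℓ l w.1.1 ≤ w.1.2 + Big * (1 - w.2.2 (e l))}, ?_, ?_, ?_⟩
  · -- closed
    have h1 : IsClosed {w : ((Fin n → ℝ) × ℝ) × (Fin 0 → ℝ) × (Fin d → ℝ) | w.1.1 ∈ X} :=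
      hcomp.isClosed.preimage (by fun_prop)
    have h2 : ∀ j : Fin d, IsClosed {w : ((Fin n → ℝ) × ℝ) × (Fin 0 → ℝ) × (Fin d → ℝ) |
        0 ≤ w.2.2 j} := fun j => isClosed_le (by fun_prop) (by fun_prop)
    have h3 : IsClosed {w : ((Fin n → ℝ) × ℝ) × (Fin 0 → ℝ) × (Fin d → ℝ) |
        (∑ j, w.2.2 j) = 1} := isClosed_eq (by fun_prop) (by fun_prop)
    have h4 : ∀ l : Λ, IsClosed {w : ((Fin n → ℝ) × ℝ) × (Fin 0 → ℝ) × (Fin d → ℝ) |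
        ℓ l w.1.1 ≤ w.1.2 + Big * (1 - w.2.2 (e l))} := fun l =>
      isClosed_le ((hcont l).comp (by fun_prop)) (by fun_prop)
    have : {w : ((Fin n → ℝ) × ℝ) × (Fin 0 → ℝ) × (Fin d → ℝ) |
        w.1.1 ∈ X ∧ (∀ j, 0 ≤ w.2.2 j) ∧ (∑ j, w.2.2 j) = 1 ∧
        ∀ l, ℓ l w.1.1 ≤ w.1.2 + Big * (1 - w.2.2 (e l))} =
        {w | w.1.1 ∈ X} ∩ ((⋂ j, {w | 0 ≤ w.2.2 j}) ∩ ({w | (∑ j, w.2.2 j) = 1} ∩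
          ⋂ l, {w | ℓ l w.1.1 ≤ w.1.2 + Big * (1 - w.2.2 (e l))})) := by
      ext w; simp only [Set.mem_setOf_eq, Set.mem_inter_iff, Set.mem_iInter]
    rw [this]
    exact h1.inter ((isClosed_iInter h2).inter (h3.inter (isClosed_iInter h4)))
  · -- convex
    rintro ⟨⟨x1, t1⟩, y1, z1⟩ ⟨hx1, hz1, hs1, hc1⟩ ⟨⟨x2, t2⟩, y2, z2⟩ ⟨hx2, hz2, hs2, hc2⟩
      s r hs hr hsr
    refine ⟨hconv hx1 hx2 hs hr hsr, ?_, ?_, ?_⟩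
    · intro j
      simp only [Prod.smul_fst, Prod.smul_snd, Prod.fst_add, Prod.snd_add, Pi.add_apply,
        Pi.smul_apply, smul_eq_mul]
      have := hz1 j; have := hz2 j; nlinarith
    · simp only [Prod.smul_fst, Prod.smul_snd, Prod.fst_add, Prod.snd_add, Pi.add_apply,
        Pi.smul_apply, smul_eq_mul, Finset.sum_add_distrib, ← Finset.mul_sum]
      rw [hs1, hs2]; linarith
    · intro l
      simp only [Prod.smul_fst, Prod.smul_snd, Prod.fst_add, Prod.snd_add, Pi.add_apply,
        Pi.smul_apply, smul_eq_mul]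
      rw [haff l x1 x2 s r hsr]
      have h1 := hc1 l; have h2 := hc2 l
      nlinarith [mul_le_mul_of_nonneg_left h1 hs, mul_le_mul_of_nonneg_left h2 hr]
  · -- membership
    rintro ⟨x, t⟩
    constructor
    · rintro ⟨hx, l0, hl0⟩
      refine ⟨fun _ => 0, fun j => if j = e l0 then 1 else 0, ?_, hx, ?_, ?_, ?_⟩
      · intro j; by_cases h : j = e l0
        · exact ⟨1, by simp [h]⟩
        · exact ⟨0, by simp [h]⟩
      · intro j; by_cases h : j = e l0 <;> simp [h]
      · simp
      · intro l
        by_cases h : l = l0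
        · subst h; simpa using hl0
        · have : e l ≠ e l0 := fun hh => h (e.injective hh)
          have h1 : ℓ l x ≤ Um := hℓU l x hx
          have h2 : Vm ≤ ℓ l0 x := hℓV l0 x hx
          have hl0' : ℓ l0 x ≤ t := hl0
          show ℓ l x ≤ t + Big * (1 - (if e l = e l0 then (1:ℝ) else 0))
          rw [if_neg this]
          simp only [hBig]
          linarith
    · rintro ⟨y, z, hint, hx, hz0, hzs, hc⟩
      refine ⟨hx, ?_⟩
      have hex : ∃ j, 1 ≤ z j := by
        by_contra h
        push_neg at h
        have hz : ∀ j, z j = 0 := by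
          intro j
          obtain ⟨k, hk⟩ := hint j
          have h1 : (0:ℝ) ≤ z j := hz0 j
          have h2 := h j
          rw [hk] at h1 h2
          have hk0 : k = 0 := by
            have hb : (0:ℤ) ≤ k := by exact_mod_cast h1
            have hc2 : k < 1 := by exact_mod_cast h2
            omega
          rw [hk, hk0]; simp
        rw [Finset.sum_congr rfl (fun j _ => hz j)] at hzs
        simp at hzs
      obtain ⟨j, hj⟩ := hex
      refine ⟨e.symm j, ?_⟩
      have := hc (e.symm j)
      rw [Equiv.apply_symm_apply] at this
      nlinarith

lemma epi_aux {n m K N : ℕ} (hm : 0 < m) (hK : 0 < K) (hN : 0 < N)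
    (X : Set (Fin n → ℝ)) (hne : X.Nonempty) (hcomp : IsCompact X) (hconv : Convex ℝ X)
    (A : Fin K → Matrix (Fin m) (Fin n) ℝ) (ahat : Fin K → Fin m → ℝ)
    (B : Fin K → Fin n → ℝ) (bhat : Fin K → ℝ)
    (ζ : Fin N → Fin m → ℝ) (θ : ℝ) (hθ : 0 ≤ θ)
    (q : ℝ≥0∞) [Fact (1 ≤ q)] (hq : q = 1 ∨ q = ⊤) :
    IsMICPR {xt : (Fin n → ℝ) × ℝ | xt.1 ∈ X ∧
      (1 / (N : ℝ)) * ∑ i : Fin N, ⨅ k : Fin K,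
        ((∑ j, ζ i j * ((∑ i', A k j i' * xt.1 i') + ahat k j)) +
          ((∑ i', B k i' * xt.1 i') + bhat k) -
          θ * pnorm q (fun j => (∑ i', A k j i' * xt.1 i') + ahat k j)) ≤ xt.2} := by
  classical
  obtain ⟨W, instW, instne, wv, hW1, hW2⟩ := dual_rep hm θ hθ q hq
  letI := instW; letI := instne
  haveI hKne : Nonempty (Fin K) := ⟨⟨0, hK⟩⟩
  -- the family of affine functions
  have main := micpr_min_affine X hne hcomp hconv (Fin N → Fin K × W)
    (fun σ x => (1 / (N : ℝ)) * ∑ i : Fin N,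
      ((∑ j, ζ i j * ((∑ i', A (σ i).1 j i' * x i') + ahat (σ i).1 j)) +
        ((∑ i', B (σ i).1 i' * x i') + bhat (σ i).1) +
        ∑ j, wv (σ i).2 j * ((∑ i', A (σ i).1 j i' * x i') + ahat (σ i).1 j)))
    ?_ ?_
  · -- set equality
    have hseteq : {xt : (Fin n → ℝ) × ℝ | xt.1 ∈ X ∧
        (1 / (N : ℝ)) * ∑ i : Fin N, ⨅ k : Fin K,
          ((∑ j, ζ i j * ((∑ i', A k j i' * xt.1 i') + ahat k j)) +
            ((∑ i', B k i' * xt.1 i') + bhat k) -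
            θ * pnorm q (fun j => (∑ i', A k j i' * xt.1 i') + ahat k j)) ≤ xt.2} =
        {xt : (Fin n → ℝ) × ℝ | xt.1 ∈ X ∧ ∃ σ : Fin N → Fin K × W,
          (1 / (N : ℝ)) * ∑ i : Fin N,
            ((∑ j, ζ i j * ((∑ i', A (σ i).1 j i' * xt.1 i') + ahat (σ i).1 j)) +
              ((∑ i', B (σ i).1 i' * xt.1 i') + bhat (σ i).1) +
              ∑ j, wv (σ i).2 j * ((∑ i', A (σ i).1 j i' * xt.1 i') + ahat (σ i).1 j))
            ≤ xt.2} := by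
      ext ⟨x, t⟩
      simp only [Set.mem_setOf_eq]
      have hFG : ∀ (i : Fin N) (k : Fin K) (w : W),
          ((∑ j, ζ i j * ((∑ i', A k j i' * x i') + ahat k j)) +
            ((∑ i', B k i' * x i') + bhat k) -
            θ * pnorm q (fun j => (∑ i', A k j i' * x i') + ahat k j)) ≤
          ((∑ j, ζ i j * ((∑ i', A k j i' * x i') + ahat k j)) +
            ((∑ i', B k i' * x i') + bhat k) +
            ∑ j, wv w j * ((∑ i', A k j i' * x i') + ahat k j)) := by
        intro i k w
        have := hW1 (fun j => (∑ i', A k j i' * x i') + ahat k j) w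
        linarith
      constructor
      · rintro ⟨hx, hle⟩
        refine ⟨hx, ?_⟩
        have hmin : ∀ i : Fin N, ∃ kw : Fin K × W,
            ((∑ j, ζ i j * ((∑ i', A kw.1 j i' * x i') + ahat kw.1 j)) +
              ((∑ i', B kw.1 i' * x i') + bhat kw.1) +
              ∑ j, wv kw.2 j * ((∑ i', A kw.1 j i' * x i') + ahat kw.1 j)) =
            ⨅ k : Fin K, ((∑ j, ζ i j * ((∑ i', A k j i' * x i') + ahat k j)) +
              ((∑ i', B k i' * x i') + bhat k) -
              θ * pnorm q (fun j => (∑ i', A k j i' * x i') + ahat k j)) := by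
          intro i
          obtain ⟨k0, hk0⟩ := Finite.exists_min (fun k : Fin K =>
            ((∑ j, ζ i j * ((∑ i', A k j i' * x i') + ahat k j)) +
              ((∑ i', B k i' * x i') + bhat k) -
              θ * pnorm q (fun j => (∑ i', A k j i' * x i') + ahat k j)))
          obtain ⟨w0, hw0⟩ := hW2 (fun j => (∑ i', A k0 j i' * x i') + ahat k0 j)
          refine ⟨(k0, w0), ?_⟩
          have hinf : (⨅ k : Fin K, ((∑ j, ζ i j * ((∑ i', A k j i' * x i') + ahat k j)) +
              ((∑ i', B k i' * x i') + bhat k) -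
              θ * pnorm q (fun j => (∑ i', A k j i' * x i') + ahat k j))) =
              ((∑ j, ζ i j * ((∑ i', A k0 j i' * x i') + ahat k0 j)) +
              ((∑ i', B k0 i' * x i') + bhat k0) -
              θ * pnorm q (fun j => (∑ i', A k0 j i' * x i') + ahat k0 j)) :=
            le_antisymm (ciInf_le (Finite.bddBelow_range _) k0) (le_ciInf hk0)
          rw [hinf]
          simp only
          rw [hw0]
          ring
        choose σ hσ using hmin
        refine ⟨σ, ?_⟩
        rw [Finset.sum_congr rfl fun i _ => hσ i]
        exact hle
      · rintro ⟨hx, σ, hσ⟩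
        refine ⟨hx, le_trans ?_ hσ⟩
        apply mul_le_mul_of_nonneg_left _ (by positivity)
        apply Finset.sum_le_sum
        intro i _
        exact (ciInf_le (Finite.bddBelow_range _) (σ i).1).trans (hFG i (σ i).1 (σ i).2)
    rw [hseteq]
    exact main
  · -- continuity
    intro σ
    have hca : ∀ (c : Fin n → ℝ) (d0 : ℝ),
        Continuous (fun x : Fin n → ℝ => (∑ i', c i' * x i') + d0) := by
      intro c d0
      exact (continuous_finset_sum _ fun i' _ =>
        continuous_const.mul (continuous_apply i')).add continuous_const
    apply Continuous.mul continuous_const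
    apply continuous_finset_sum
    intro i _
    exact ((continuous_finset_sum _ fun j _ => continuous_const.mul (hca _ _)).add
      (hca _ _)).add
      (continuous_finset_sum _ fun j _ => continuous_const.mul (hca _ _))
  · -- affinity
    intro σ u v s r hsr
    beta_reduce
    have haffc : ∀ (c : Fin n → ℝ) (d0 : ℝ),
        (∑ i', c i' * (s • u + r • v) i') + d0 =
          s * ((∑ i', c i' * u i') + d0) + r * ((∑ i', c i' * v i') + d0) := by
      intro c d0
      have h1 : ∑ i', c i' * (s • u + r • v) i' =
          s * ∑ i', c i' * u i' + r * ∑ i', c i' * v i' := by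
        simp only [Pi.add_apply, Pi.smul_apply, smul_eq_mul]
        rw [Finset.mul_sum, Finset.mul_sum, ← Finset.sum_add_distrib]
        exact Finset.sum_congr rfl fun i' _ => by ring
      rw [h1]
      linear_combination d0 * hsr.symm
    have hsum2 : ∀ (c XX YY : Fin m → ℝ),
        (∑ j, c j * (s * XX j + r * YY j)) =
          s * ∑ j, c j * XX j + r * ∑ j, c j * YY j := by
      intro c XX YY
      rw [Finset.mul_sum, Finset.mul_sum, ← Finset.sum_add_distrib]
      exact Finset.sum_congr rfl fun j _ => by ring
    have hper : ∀ i : Fin N,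
        ((∑ j, ζ i j * ((∑ i', A (σ i).1 j i' * (s • u + r • v) i') + ahat (σ i).1 j)) +
          ((∑ i', B (σ i).1 i' * (s • u + r • v) i') + bhat (σ i).1) +
          ∑ j, wv (σ i).2 j * ((∑ i', A (σ i).1 j i' * (s • u + r • v) i') + ahat (σ i).1 j)) =
        s * ((∑ j, ζ i j * ((∑ i', A (σ i).1 j i' * u i') + ahat (σ i).1 j)) +
          ((∑ i', B (σ i).1 i' * u i') + bhat (σ i).1) +
          ∑ j, wv (σ i).2 j * ((∑ i', A (σ i).1 j i' * u i') + ahat (σ i).1 j)) +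
        r * ((∑ j, ζ i j * ((∑ i', A (σ i).1 j i' * v i') + ahat (σ i).1 j)) +
          ((∑ i', B (σ i).1 i' * v i') + bhat (σ i).1) +
          ∑ j, wv (σ i).2 j * ((∑ i', A (σ i).1 j i' * v i') + ahat (σ i).1 j)) := by
      intro i
      simp only [haffc]
      simp only [hsum2]
      ring
    rw [Finset.sum_congr rfl fun i _ => hper i]
    rw [Finset.sum_add_distrib, ← Finset.mul_sum, ← Finset.mul_sum]
    ring

/-- The objective of DFO over the type-∞ Wasserstein ambiguity set with concave
piecewise affine recourse, namely
`g(x) = (1/N) ∑ᵢ min_k ((ζⁱ)ᵀ a_k(x) + b_k(x) − θ‖a_k(x)‖_q)` with dual exponent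
`q ∈ {1, ∞}`, is MICP-representable: both its domain `X` and its epigraph are
MICP-representable. -/
theorem dfo_wasserstein_concave_micpr {n m K N : ℕ} (hm : 0 < m) (hK : 0 < K)
    (hN : 0 < N) (X : Set (Fin n → ℝ)) (hne : X.Nonempty) (hcomp : IsCompact X)
    (hconv : Convex ℝ X)
    (A : Fin K → Matrix (Fin m) (Fin n) ℝ) (ahat : Fin K → Fin m → ℝ)
    (B : Fin K → Fin n → ℝ) (bhat : Fin K → ℝ)
    (ζ : Fin N → Fin m → ℝ) (θ : ℝ) (hθ : 0 ≤ θ)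
    (q : ℝ≥0∞) [Fact (1 ≤ q)] (hq : q = 1 ∨ q = ⊤) :
    let a : Fin K → (Fin n → ℝ) → Fin m → ℝ :=
      fun k x j => (∑ i, A k j i * x i) + ahat k j
    let b : Fin K → (Fin n → ℝ) → ℝ := fun k x => (∑ i, B k i * x i) + bhat k
    let g : (Fin n → ℝ) → ℝ := fun x =>
      (1 / (N : ℝ)) * ∑ i : Fin N,
        ⨅ k : Fin K, ((∑ j, ζ i j * a k x j) + b k x - θ * pnorm q (a k x))
    IsMICPR X ∧ IsMICPR {xt : (Fin n → ℝ) × ℝ | xt.1 ∈ X ∧ g xt.1 ≤ xt.2} := by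
  intro a b g
  constructor
  · refine ⟨0, 0, {w : (Fin n → ℝ) × (Fin 0 → ℝ) × (Fin 0 → ℝ) | w.1 ∈ X}, ?_, ?_, ?_⟩
    · exact hcomp.isClosed.preimage continuous_fst
    · intro w1 hw1 w2 hw2 s r hs hr hsr
      simp only [Set.mem_setOf_eq, Prod.fst_add, Prod.smul_fst] at *
      exact hconv hw1 hw2 hs hr hsr
    · intro x
      constructor
      · intro hx
        exact ⟨fun i => i.elim0, fun i => i.elim0, fun i => i.elim0, hx⟩
      · rintro ⟨y, z, -, hx⟩
        exact hx
  · exact epi_aux hm hK hN X hne hcomp hconv A ahat B bhat ζ θ hθ q hq
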